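/- arXiv:2310.13427 — 7 statements merged into one kernel-verified Lean document; each statement's English description precedes it below -/
import Mathlib

section
/- In an abelian ℓ-group, the ideal generated by a subset T equals the intersection of all prime ideals containing T. -/
/-!
The ideal generated by `T` is contained in every prime ideal containing `T`. Conversely, if `g`
lies outside some ideal containing `T`, Zorn's lemma gives an ideal `M ⊇ T` maximal among those
avoiding `g`, and `M` is prime: if `a ⊓ b ∈ M` but `a, b ∉ M`, then `a' = a - a ⊓ b` and
`b' = b - a ⊓ b` are disjoint positive elements outside `M`, so by maximality `|g|` is bounded
both by `m₁ + k • a'` and by `m₂ + n • b'` with `0 ≤ mᵢ ∈ M`. Since multiples of disjoint elements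
stay disjoint, taking the infimum gives `|g| ≤ m₁ + m₂`, whence `g ∈ M`.
-/

variable {G : Type*}

/-- An ideal of an abelian ℓ-group: a subgroup closed under domination by absolute value. -/
def IsLIdeal [Lattice G] [AddCommGroup G] (J : Set G) : Prop :=
  (0 : G) ∈ J ∧ (∀ x ∈ J, ∀ y ∈ J, x + y ∈ J) ∧ (∀ x ∈ J, -x ∈ J) ∧
    ∀ x ∈ J, ∀ y : G, |y| ≤ |x| → y ∈ J

/-- A prime ideal of an abelian ℓ-group: a proper ideal `P` with
`a ⊓ b ∈ P → a ∈ P ∨ b ∈ P`. -/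
def IsPrimeLIdeal [Lattice G] [AddCommGroup G] (P : Set G) : Prop :=
  IsLIdeal P ∧ P ≠ Set.univ ∧ ∀ a b : G, a ⊓ b ∈ P → a ∈ P ∨ b ∈ P

section Disjoint

variable [Lattice G] [AddCommGroup G] [CovariantClass G G (· + ·) (· ≤ ·)] {a b c : G}

theorem inf_add_eq_zero (hab : a ⊓ b = 0) (hac : a ⊓ c = 0) : a ⊓ (b + c) = 0 := by
  have ha : (0 : G) ≤ a := hab ▸ inf_le_left
  have hb : (0 : G) ≤ b := hab ▸ inf_le_right
  have hc : (0 : G) ≤ c := hac ▸ inf_le_right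
  refine le_antisymm ?_ (by simpa using inf_le_inf ha (add_nonneg hb hc))
  calc a ⊓ (b + c) ≤ a ⊓ ((a + c) ⊓ (b + c)) :=
        le_inf inf_le_left (le_inf (inf_le_left.trans (le_add_of_nonneg_right hc)) inf_le_right)
    _ = a ⊓ c := by rw [← inf_add, hab, zero_add]
    _ = 0 := hac

theorem inf_nsmul_eq_zero (hab : a ⊓ b = 0) (n : ℕ) : a ⊓ n • b = 0 := by
  have ha : (0 : G) ≤ a := hab ▸ inf_le_left
  induction n with
  | zero => simpa using ha
  | succ n ih => rw [succ_nsmul]; exact inf_add_eq_zero ih hab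

theorem nsmul_inf_nsmul_eq_zero (hab : a ⊓ b = 0) (k n : ℕ) : k • a ⊓ n • b = 0 := by
  have hba : b ⊓ k • a = 0 := inf_nsmul_eq_zero (by rwa [inf_comm]) k
  exact inf_nsmul_eq_zero (by rwa [inf_comm]) n

end Disjoint

/-- For an ideal `M` and `0 ≤ c`, this is the ideal generated by `M` and `c`. -/
def IsLIdeal.adjoin [Lattice G] [AddCommGroup G] (M : Set G) (c : G) : Set G :=
  {y | ∃ m ∈ M, 0 ≤ m ∧ ∃ n : ℕ, |y| ≤ m + n • c}

namespace IsLIdeal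

section Lattice

variable [Lattice G] [AddCommGroup G] {J : Set G}

theorem zero_mem (hJ : IsLIdeal J) : (0 : G) ∈ J := hJ.1

theorem add_mem (hJ : IsLIdeal J) {x y : G} (hx : x ∈ J) (hy : y ∈ J) : x + y ∈ J :=
  hJ.2.1 x hx y hy

theorem neg_mem (hJ : IsLIdeal J) {x : G} (hx : x ∈ J) : -x ∈ J := hJ.2.2.1 x hx

theorem mem_of_abs_le (hJ : IsLIdeal J) {x y : G} (hx : x ∈ J) (hyx : |y| ≤ |x|) : y ∈ J :=
  hJ.2.2.2 x hx y hyx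

theorem sUnion_of_isChain {c : Set (Set G)} (hc : ∀ J ∈ c, IsLIdeal J)
    (hchain : IsChain (· ⊆ ·) c) (hne : c.Nonempty) : IsLIdeal (⋃₀ c) := by
  obtain ⟨J₀, hJ₀⟩ := hne
  refine ⟨⟨J₀, hJ₀, (hc J₀ hJ₀).zero_mem⟩, ?_, ?_, ?_⟩
  · rintro x ⟨J₁, hJ₁, hx⟩ y ⟨J₂, hJ₂, hy⟩
    rcases hchain.total hJ₁ hJ₂ with h | h
    · exact ⟨J₂, hJ₂, (hc J₂ hJ₂).add_mem (h hx) hy⟩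
    · exact ⟨J₁, hJ₁, (hc J₁ hJ₁).add_mem hx (h hy)⟩
  · rintro x ⟨J, hJ, hx⟩
    exact ⟨J, hJ, (hc J hJ).neg_mem hx⟩
  · rintro x ⟨J, hJ, hx⟩ y hyx
    exact ⟨J, hJ, (hc J hJ).mem_of_abs_le hx hyx⟩

theorem exists_maximal_notMem (hJ : IsLIdeal J) {g : G} (hg : g ∉ J) :
    ∃ M, J ⊆ M ∧ Maximal (fun I => IsLIdeal I ∧ g ∉ I) M := by
  refine zorn_subset_nonempty {I | IsLIdeal I ∧ g ∉ I} (fun c hcS hchain hne => ?_) J ⟨hJ, hg⟩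
  refine ⟨⋃₀ c, ⟨sUnion_of_isChain (fun I hI => (hcS hI).1) hchain hne, ?_⟩,
    fun I hI => Set.subset_sUnion_of_mem hI⟩
  rintro ⟨I, hI, hgI⟩
  exact (hcS hI).2 hgI

end Lattice

variable [Lattice G] [AddCommGroup G] [CovariantClass G G (· + ·) (· ≤ ·)] {M : Set G}

theorem isLIdeal_adjoin (hM : IsLIdeal M) (c : G) : IsLIdeal (adjoin M c) := by
  refine ⟨⟨0, hM.zero_mem, le_rfl, 0, by simp⟩, ?_, ?_, ?_⟩
  · rintro x ⟨m₁, hm₁, hm₁0, k, hk⟩ y ⟨m₂, hm₂, hm₂0, n, hn⟩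
    refine ⟨m₁ + m₂, hM.add_mem hm₁ hm₂, add_nonneg hm₁0 hm₂0, k + n, ?_⟩
    calc |x + y| ≤ |x| + |y| := abs_add_le x y
      _ ≤ (m₁ + k • c) + (m₂ + n • c) := add_le_add hk hn
      _ = m₁ + m₂ + (k + n) • c := by rw [add_nsmul]; abel
  · rintro x ⟨m, hm, hm0, n, hn⟩
    exact ⟨m, hm, hm0, n, by rwa [abs_neg]⟩
  · rintro x ⟨m, hm, hm0, n, hn⟩ y hyx
    exact ⟨m, hm, hm0, n, hyx.trans hn⟩

theorem subset_adjoin (hM : IsLIdeal M) (c : G) : M ⊆ adjoin M c :=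
  fun x hx => ⟨|x|, hM.mem_of_abs_le hx (abs_abs x).le, abs_nonneg x, 0, by simp⟩

theorem mem_adjoin_self (hM : IsLIdeal M) {c : G} (hc : 0 ≤ c) : c ∈ adjoin M c :=
  ⟨0, hM.zero_mem, le_rfl, 1, by simp [abs_of_nonneg hc]⟩

end IsLIdeal

section Maximal

variable [Lattice G] [AddCommGroup G] [CovariantClass G G (· + ·) (· ≤ ·)] {M : Set G} {g : G}

theorem Maximal.mem_adjoin (hM : Maximal (fun I => IsLIdeal I ∧ g ∉ I) M) {c : G} (hc : 0 ≤ c)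
    (hcM : c ∉ M) : g ∈ IsLIdeal.adjoin M c := by
  by_contra hg
  exact hcM <| hM.2 ⟨hM.1.1.isLIdeal_adjoin c, hg⟩ (hM.1.1.subset_adjoin c)
    (hM.1.1.mem_adjoin_self hc)

theorem Maximal.isPrimeLIdeal (hM : Maximal (fun I => IsLIdeal I ∧ g ∉ I) M) :
    IsPrimeLIdeal M := by
  obtain ⟨hMideal, hgM⟩ := hM.1
  refine ⟨hMideal, fun h => hgM (h ▸ Set.mem_univ g), fun a b hab => ?_⟩
  by_contra! ⟨ha, hb⟩
  set d := a ⊓ b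
  have hdisj : (a - d) ⊓ (b - d) = 0 := by rw [← inf_sub, sub_self]
  have sub_notMem : ∀ x ∉ M, x - d ∉ M := fun x hx h =>
    hx (by simpa using hMideal.add_mem h hab)
  obtain ⟨m₁, hm₁, hm₁0, k, hk⟩ := hM.mem_adjoin (sub_nonneg.2 inf_le_left) (sub_notMem a ha)
  obtain ⟨m₂, hm₂, hm₂0, n, hn⟩ := hM.mem_adjoin (sub_nonneg.2 inf_le_right) (sub_notMem b hb)
  have hg : |g| ≤ |m₁ + m₂| :=
    calc |g| ≤ (m₁ + k • (a - d)) ⊓ (m₂ + n • (b - d)) := le_inf hk hn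
      _ ≤ (m₁ + m₂ + k • (a - d)) ⊓ (m₁ + m₂ + n • (b - d)) := by
        gcongr
        exacts [le_add_of_nonneg_right hm₂0, le_add_of_nonneg_left hm₁0]
      _ = m₁ + m₂ := by rw [← add_inf, nsmul_inf_nsmul_eq_zero hdisj, add_zero]
      _ = |m₁ + m₂| := (abs_of_nonneg (add_nonneg hm₁0 hm₂0)).symm
  exact hgM (hMideal.mem_of_abs_le (hMideal.add_mem hm₁ hm₂) hg)

end Maximal

/-- In an abelian ℓ-group, the ideal generated by a subset `T` (the intersection of all
ideals containing `T`) equals the intersection of all prime ideals containing `T`. -/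
theorem stmt3 [Lattice G] [AddCommGroup G] [CovariantClass G G (· + ·) (· ≤ ·)]
    (T : Set G) :
    ⋂₀ {J : Set G | IsLIdeal J ∧ T ⊆ J} = ⋂₀ {P : Set G | IsPrimeLIdeal P ∧ T ⊆ P} := by
  refine subset_antisymm (Set.sInter_subset_sInter fun P hP => ⟨hP.1.1, hP.2⟩) fun g hg => ?_
  by_contra hgT
  obtain ⟨J, hJ, hTJ, hgJ⟩ : ∃ J, IsLIdeal J ∧ T ⊆ J ∧ g ∉ J := by
    simpa [Set.mem_sInter] using hgT
  obtain ⟨M, hJM, hM⟩ := hJ.exists_maximal_notMem hgJ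
  exact hM.1.2 (hg M ⟨hM.isPrimeLIdeal, hTJ.trans hJM⟩)
end

section
/- Let U be a linearly ordered abelian ℓ-group, κ a cardinal, and for T a set of elements of the free abelian ℓ-group F_κ define V(T) = {x ∈ U^κ : t(x) = 0 for all t ∈ T} (interpreting terms as functions). Then for any two ideals J₁, J₂ of F_κ, V(J₁ ∩ J₂) = V(J₁) ∪ V(J₂). -/
/-!
If `x` lies in neither `V J₁` nor `V J₂`, pick `t₁ ∈ J₁`, `t₂ ∈ J₂` with `t₁(x) ≠ 0 ≠ t₂(x)`.
Since ideals are absolutely convex, `|t₁| ⊓ |t₂|` lies in `J₁ ∩ J₂`, and its value at `x` is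
`|t₁(x)| ⊓ |t₂(x)|`, which is nonzero because `U` is linearly ordered.
-/

theorem min_abs_abs_eq_zero_iff {U : Type*} [AddCommGroup U] [LinearOrder U]
    [IsOrderedAddMonoid U] {a b : U} : min |a| |b| = 0 ↔ a = 0 ∨ b = 0 := by
  constructor
  · intro h
    rcases min_choice |a| |b| with hm | hm <;> rw [hm, abs_eq_zero] at h <;> simp [h]
  · rintro (rfl | rfl) <;> simp

theorem map_abs_of_map_neg_of_map_sup {F U : Type*} [Lattice F] [AddGroup F] [Lattice U]
    [AddGroup U] {f : F → U}
    (hneg : ∀ a, f (-a) = -f a) (hsup : ∀ a b, f (a ⊔ b) = f a ⊔ f b) (a : F) :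
    f |a| = |f a| := by
  rw [abs, abs, hsup, hneg]

section Ideal

variable {F : Type*} [Lattice F] [AddCommGroup F] [CovariantClass F F (· + ·) (· ≤ ·)]

theorem abs_inf_abs_mem_of_mem {J : Set F} (hJ : ∀ x ∈ J, ∀ y : F, |y| ≤ |x| → y ∈ J)
    {a : F} (ha : a ∈ J) (b : F) : |a| ⊓ |b| ∈ J := by
  refine hJ a ha _ ?_
  rw [abs_of_nonneg (le_inf (abs_nonneg a) (abs_nonneg b))]
  exact inf_le_left

theorem eq_zero_on_left_or_right_of_eq_zero_on_inter {U : Type*} [AddCommGroup U]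
    [LinearOrder U] [IsOrderedAddMonoid U] {f : F → U}
    (hneg : ∀ a, f (-a) = -f a) (hsup : ∀ a b, f (a ⊔ b) = f a ⊔ f b)
    (hinf : ∀ a b, f (a ⊓ b) = f a ⊓ f b) {J₁ J₂ : Set F}
    (hJ₁ : ∀ x ∈ J₁, ∀ y : F, |y| ≤ |x| → y ∈ J₁) (hJ₂ : ∀ x ∈ J₂, ∀ y : F, |y| ≤ |x| → y ∈ J₂)
    (h : ∀ t ∈ J₁, t ∈ J₂ → f t = 0) : (∀ t ∈ J₁, f t = 0) ∨ ∀ t ∈ J₂, f t = 0 := by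
  by_contra! ⟨⟨t₁, ht₁, h₁⟩, ⟨t₂, ht₂, h₂⟩⟩
  have hmem₂ : |t₁| ⊓ |t₂| ∈ J₂ := inf_comm |t₂| |t₁| ▸ abs_inf_abs_mem_of_mem hJ₂ ht₂ t₁
  have hzero := h _ (abs_inf_abs_mem_of_mem hJ₁ ht₁ t₂) hmem₂
  rw [hinf, map_abs_of_map_neg_of_map_sup hneg hsup, map_abs_of_map_neg_of_map_sup hneg hsup]
    at hzero
  exact (min_abs_abs_eq_zero_iff.mp hzero).elim h₁ h₂

end Ideal

theorem stmt4_general {κ U F : Type*} [AddCommGroup U] [LinearOrder U] [IsOrderedAddMonoid U]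
    [Lattice F] [AddCommGroup F] [CovariantClass F F (· + ·) (· ≤ ·)]
    (ev : (κ → U) → F → U)
    (hev_neg : ∀ x (a : F), ev x (-a) = -(ev x a))
    (hev_inf : ∀ x (a b : F), ev x (a ⊓ b) = ev x a ⊓ ev x b)
    (hev_sup : ∀ x (a b : F), ev x (a ⊔ b) = ev x a ⊔ ev x b)
    (J₁ J₂ : AddSubgroup F)
    (hs₁ : ∀ x ∈ J₁, ∀ y : F, |y| ≤ |x| → y ∈ J₁)
    (hs₂ : ∀ x ∈ J₂, ∀ y : F, |y| ≤ |x| → y ∈ J₂) :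
    {x : κ → U | ∀ t : F, t ∈ J₁ → t ∈ J₂ → ev x t = 0} =
      {x : κ → U | ∀ t ∈ J₁, ev x t = 0} ∪ {x : κ → U | ∀ t ∈ J₂, ev x t = 0} := by
  ext x
  constructor
  · exact eq_zero_on_left_or_right_of_eq_zero_on_inter (hev_neg x) (hev_sup x) (hev_inf x) hs₁ hs₂
  · rintro (h | h) t ht₁ ht₂
    exacts [h t ht₁, h t ht₂]

/-- Here `F` plays the role of the free abelian ℓ-group `F_κ` on `κ` generators, and
`ev x t` is the evaluation of the term (element) `t` of `F_κ` at the point `x : κ → U`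
(so `ev x` is an ℓ-group homomorphism `F_κ → U`).  `V T = {x | ∀ t ∈ T, ev x t = 0}`.
For any two ideals `J₁, J₂` of `F_κ`, `V (J₁ ∩ J₂) = V J₁ ∪ V J₂`. -/
theorem stmt4 {κ U F : Type*} [AddCommGroup U] [LinearOrder U] [IsOrderedAddMonoid U]
    [Lattice F] [AddCommGroup F] [CovariantClass F F (· + ·) (· ≤ ·)]
    (ev : (κ → U) → F → U)
    (hev_add : ∀ x (a b : F), ev x (a + b) = ev x a + ev x b)
    (hev_neg : ∀ x (a : F), ev x (-a) = -(ev x a))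
    (hev_inf : ∀ x (a b : F), ev x (a ⊓ b) = ev x a ⊓ ev x b)
    (hev_sup : ∀ x (a b : F), ev x (a ⊔ b) = ev x a ⊔ ev x b)
    (J₁ J₂ : AddSubgroup F)
    (hs₁ : ∀ x ∈ J₁, ∀ y : F, |y| ≤ |x| → y ∈ J₁)
    (hs₂ : ∀ x ∈ J₂, ∀ y : F, |y| ≤ |x| → y ∈ J₂) :
    {x : κ → U | ∀ t : F, t ∈ J₁ → t ∈ J₂ → ev x t = 0} =
      {x : κ → U | ∀ t ∈ J₁, ev x t = 0} ∪ {x : κ → U | ∀ t ∈ J₂, ev x t = 0} :=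
  stmt4_general ev hev_neg hev_inf hev_sup J₁ J₂ hs₁ hs₂
end

section
/- Let U be a proper ordered field extension of ℝ in which every limited element has a standard part, and let x ∈ U^n be written as x = α₁v₁ + ⋯ + α_kv_k where α₁,…,α_k ∈ U are strictly positive with α_{i+1}/α_i infinitesimal for each i < k, and v₁,…,v_k ∈ ℝ^n are orthonormal. Then: (1) k ≤ n; (2) α_j/α_i is infinitesimal whenever i < j; (3) x is limited (all coordinates limited) if and only if α₁ is limited, and in that case st(x) = st(α₁)·v₁; (4) x is infinitesimal if and only if α₁ is infinitesimal. -/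
/-- `x` is infinitesimal in the ordered field extension `K` of `ℝ` (via `f`). -/
def Infml {K : Type*} [Field K] [LinearOrder K] [IsStrictOrderedRing K] (f : ℝ →+* K) (x : K) : Prop :=
  ∀ r : ℝ, 0 < r → |x| < f r

/-- `x` is limited in the ordered field extension `K` of `ℝ` (via `f`). -/
def Ltd {K : Type*} [Field K] [LinearOrder K] [IsStrictOrderedRing K] (f : ℝ →+* K) (x : K) : Prop :=
  ∃ r : ℝ, |x| < f r


/-!
The coefficients of `x` in an orthonormal family are recovered as `αⱼ = ∑_c x_c vⱼ_c`, so
`x` is limited (resp. infinitesimal) exactly when all `αᵢ` are; the same identity over `ℝ`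
gives linear independence of the `vᵢ`, whence `k ≤ n`. Chaining the consecutive ratios shows
`αᵢ/α₁` infinitesimal for `i > 1`, so every `αᵢ` is dominated by `α₁`, and when `α₁` is limited
`x - st(α₁) v₁ = (α₁ - st α₁) v₁ + ∑_{i>1} αᵢ vᵢ` is infinitesimal.
-/

open Finset

section Orthonormal

variable {ι : Type*} [Fintype ι] [DecidableEq ι] {n : ℕ} {v : ι → Fin n → ℝ}

theorem sum_mul_map_eq_coeff_of_orthonormal {R : Type*} [CommSemiring R] (φ : ℝ →+* R)
    (horth : ∀ i j, (∑ c : Fin n, v i c * v j c) = if i = j then 1 else 0) (a : ι → R) (j : ι) :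
    ∑ c : Fin n, (∑ i, a i * φ (v i c)) * φ (v j c) = a j := by
  calc ∑ c : Fin n, (∑ i, a i * φ (v i c)) * φ (v j c)
      = ∑ i, a i * φ (∑ c : Fin n, v i c * v j c) := by
        simp only [sum_mul, map_sum, mul_sum, map_mul, mul_assoc]
        exact sum_comm
    _ = a j := by simp [horth]

theorem forall_coord_iff_forall_coeff {R : Type*} [CommSemiring R] {φ : ℝ →+* R} {a : ι → R}
    {x : Fin n → R} {P : R → Prop} (hzero : P 0) (hadd : ∀ y z, P y → P z → P (y + z))
    (hmul : ∀ y r, P y → P (y * φ r))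
    (horth : ∀ i j, (∑ c : Fin n, v i c * v j c) = if i = j then 1 else 0)
    (hx : ∀ c, x c = ∑ i, a i * φ (v i c)) :
    (∀ c, P (x c)) ↔ ∀ i, P (a i) := by
  refine ⟨fun h j => ?_, fun h c => ?_⟩
  · rw [← sum_mul_map_eq_coeff_of_orthonormal φ horth a j]
    simp_rw [← hx]
    exact sum_induction _ P hadd hzero fun c _ => hmul (x c) _ (h c)
  · rw [hx c]
    exact sum_induction _ P hadd hzero fun i _ => hmul (a i) _ (h i)

theorem linearIndependent_of_orthonormal
    (horth : ∀ i j, (∑ c : Fin n, v i c * v j c) = if i = j then 1 else 0) :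
    LinearIndependent ℝ v := by
  refine Fintype.linearIndependent_iff.2 fun g hg j => ?_
  have hcoord (c : Fin n) : ∑ i, g i * v i c = 0 := by
    simpa using congrFun hg c
  simpa [hcoord] using (sum_mul_map_eq_coeff_of_orthonormal (RingHom.id ℝ) horth g j).symm

theorem card_le_of_orthonormal
    (horth : ∀ i j, (∑ c : Fin n, v i c * v j c) = if i = j then 1 else 0) :
    Fintype.card ι ≤ n := by
  simpa using (linearIndependent_of_orthonormal horth).fintype_card_le_finrank

end Orthonormal

section Infinitesimals

variable {K : Type*} [Field K] [LinearOrder K] [IsStrictOrderedRing K] {f : ℝ →+* K}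

theorem Infml.ltd {x : K} (h : Infml f x) : Ltd f x := ⟨1, h 1 one_pos⟩

theorem ltd_zero : Ltd f 0 := ⟨1, by simp⟩

theorem infml_zero (hf : StrictMono f) : Infml f 0 := fun r hr => by
  simpa using hf hr

theorem ltd_map (hf : StrictMono f) (r : ℝ) : Ltd f (f r) := by
  refine ⟨|r| + 1, abs_lt.2 ⟨?_, ?_⟩⟩
  · rw [← map_neg]
    exact hf (by linarith [neg_abs_le r])
  · exact hf (by linarith [le_abs_self r])

theorem Ltd.add {x y : K} (hx : Ltd f x) (hy : Ltd f y) : Ltd f (x + y) := by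
  obtain ⟨r, hr⟩ := hx
  obtain ⟨s, hs⟩ := hy
  refine ⟨r + s, ?_⟩
  calc |x + y| ≤ |x| + |y| := abs_add_le x y
    _ < f r + f s := add_lt_add hr hs
    _ = f (r + s) := (map_add f r s).symm

theorem Infml.add {x y : K} (hx : Infml f x) (hy : Infml f y) : Infml f (x + y) := by
  intro r hr
  calc |x + y| ≤ |x| + |y| := abs_add_le x y
    _ < f (r / 2) + f (r / 2) := add_lt_add (hx _ (half_pos hr)) (hy _ (half_pos hr))
    _ = f r := by rw [← map_add, add_halves]

theorem Infml.sub {x y : K} (hx : Infml f x) (hy : Infml f y) : Infml f (x - y) := by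
  rw [sub_eq_add_neg]
  exact hx.add fun r hr => by simpa using hy r hr

theorem Ltd.mul {x y : K} (hx : Ltd f x) (hy : Ltd f y) : Ltd f (x * y) := by
  obtain ⟨r, hr⟩ := hx
  obtain ⟨s, hs⟩ := hy
  refine ⟨r * s, ?_⟩
  rw [abs_mul, map_mul]
  exact mul_lt_mul'' hr hs (abs_nonneg x) (abs_nonneg y)

theorem Infml.mul_ltd (hf : StrictMono f) {x y : K} (hx : Infml f x) (hy : Ltd f y) :
    Infml f (x * y) := by
  obtain ⟨s, hs⟩ := hy
  have hs0 : 0 < f s := (abs_nonneg y).trans_lt hs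
  have hspos : 0 < s := by simpa using hf.lt_iff_lt.1 (by simpa using hs0 : f 0 < f s)
  intro r hr
  calc |x * y| = |x| * |y| := abs_mul x y
    _ < f (r / s) * f s := mul_lt_mul'' (hx _ (div_pos hr hspos)) hs (abs_nonneg x) (abs_nonneg y)
    _ = f r := by rw [← map_mul, div_mul_cancel₀ _ hspos.ne']

theorem Infml.sum {ι : Type*} (hf : StrictMono f) {s : Finset ι} {g : ι → K}
    (h : ∀ i ∈ s, Infml f (g i)) : Infml f (∑ i ∈ s, g i) :=
  sum_induction g (Infml f) (fun _ _ => Infml.add) (infml_zero hf) h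

theorem Ltd.sum {ι : Type*} {s : Finset ι} {g : ι → K} (h : ∀ i ∈ s, Ltd f (g i)) :
    Ltd f (∑ i ∈ s, g i) :=
  sum_induction g (Ltd f) (fun _ _ => Ltd.add) ltd_zero h

theorem Infml.of_div_of_ltd (hf : StrictMono f) {a b : K} (hba : Infml f (b / a)) (ha : Ltd f a)
    (ha0 : a ≠ 0) : Infml f b := by
  simpa [div_mul_cancel₀ _ ha0] using hba.mul_ltd hf ha

theorem eq_zero_of_infml_map {r : ℝ} (h : Infml f (f r)) : r = 0 := by
  by_contra hr
  have hlt := h |r| (abs_pos.2 hr)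
  rcases abs_choice r with habs | habs <;> rw [habs] at hlt
  · exact (le_abs_self (f r)).not_gt hlt
  · rw [map_neg] at hlt
    exact (neg_le_abs (f r)).not_gt hlt

theorem st_eq_of_infml_sub {st : K → ℝ}
    (hst : ∀ x : K, Ltd f x → Infml f (x - f (st x))) {x : K} {s : ℝ} (hx : Ltd f x)
    (h : Infml f (x - f s)) : st x = s := by
  have hdiff : Infml f (f (st x - s)) := by
    simpa [map_sub] using h.sub (hst x hx)
  linarith [eq_zero_of_infml_map hdiff]

theorem st_sum_eq_of_infml_of_ne {ι : Type*} [Fintype ι] [DecidableEq ι] (hf : StrictMono f)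
    {st : K → ℝ} (hst : ∀ x : K, Ltd f x → Infml f (x - f (st x))) {a : ι → K} {w : ι → ℝ}
    {i₀ : ι} (hltd : ∀ i, Ltd f (a i)) (hsmall : ∀ i ≠ i₀, Infml f (a i)) :
    st (∑ i, a i * f (w i)) = st (a i₀) * w i₀ := by
  refine st_eq_of_infml_sub hst (Ltd.sum fun i _ => (hltd i).mul (ltd_map hf _)) ?_
  rw [← add_sum_erase _ _ (mem_univ i₀), map_mul, add_sub_right_comm, ← sub_mul]
  refine ((hst _ (hltd i₀)).mul_ltd hf (ltd_map hf _)).add (Infml.sum hf fun i hi => ?_)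
  exact (hsmall i (ne_of_mem_erase hi)).mul_ltd hf (ltd_map hf _)

end Infinitesimals

section Decomposition

variable {K : Type*} [Field K] [LinearOrder K] [IsStrictOrderedRing K] {f : ℝ →+* K}
  {k : ℕ} {a : Fin k → K}

theorem infml_div_of_lt (hf : StrictMono f) (ha : ∀ i, a i ≠ 0)
    (hratio : ∀ (i : ℕ) (h : i + 1 < k), Infml f (a ⟨i + 1, h⟩ / a ⟨i, Nat.lt_of_succ_lt h⟩))
    {i j : Fin k} (hij : i < j) : Infml f (a j / a i) := by
  obtain ⟨j, hj⟩ := j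
  induction j with
  | zero => exact absurd (Fin.lt_def.1 hij) (Nat.not_lt_zero _)
  | succ j ih =>
    have hjk : j < k := Nat.lt_of_succ_lt hj
    rcases Nat.lt_succ_iff_lt_or_eq.1 (Fin.lt_def.1 hij) with hlt | rfl
    · rw [← div_mul_div_cancel₀ (ha ⟨j, hjk⟩)]
      exact (hratio j hj).mul_ltd hf (ih hjk hlt).ltd
    · exact hratio i hj

theorem infml_of_ltd_head (hf : StrictMono f) (ha : ∀ i, a i ≠ 0)
    (hratio : ∀ (i : ℕ) (h : i + 1 < k), Infml f (a ⟨i + 1, h⟩ / a ⟨i, Nat.lt_of_succ_lt h⟩))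
    (hk : 0 < k) (h₀ : Ltd f (a ⟨0, hk⟩)) {i : Fin k} (hi : i ≠ ⟨0, hk⟩) : Infml f (a i) :=
  have hi₀ : (⟨0, hk⟩ : Fin k) < i := Fin.lt_def.2 (Nat.pos_of_ne_zero (Fin.val_ne_iff.2 hi))
  (infml_div_of_lt hf ha hratio hi₀).of_div_of_ltd hf h₀ (ha _)

theorem forall_ltd_iff_ltd_head (hf : StrictMono f) (ha : ∀ i, a i ≠ 0)
    (hratio : ∀ (i : ℕ) (h : i + 1 < k), Infml f (a ⟨i + 1, h⟩ / a ⟨i, Nat.lt_of_succ_lt h⟩))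
    (hk : 0 < k) : (∀ i, Ltd f (a i)) ↔ Ltd f (a ⟨0, hk⟩) := by
  refine ⟨fun h => h _, fun h₀ i => ?_⟩
  by_cases hi : i = ⟨0, hk⟩
  · exact hi ▸ h₀
  · exact (infml_of_ltd_head hf ha hratio hk h₀ hi).ltd

theorem forall_infml_iff_infml_head (hf : StrictMono f) (ha : ∀ i, a i ≠ 0)
    (hratio : ∀ (i : ℕ) (h : i + 1 < k), Infml f (a ⟨i + 1, h⟩ / a ⟨i, Nat.lt_of_succ_lt h⟩))
    (hk : 0 < k) : (∀ i, Infml f (a i)) ↔ Infml f (a ⟨0, hk⟩) := by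
  refine ⟨fun h => h _, fun h₀ i => ?_⟩
  by_cases hi : i = ⟨0, hk⟩
  · exact hi ▸ h₀
  · exact infml_of_ltd_head hf ha hratio hk h₀.ltd hi

end Decomposition

theorem stmt10_general {K : Type*} [Field K] [LinearOrder K] [IsStrictOrderedRing K] (f : ℝ →+* K) (hf : StrictMono f)
    (st : K → ℝ)
    (hst : ∀ x : K, Ltd f x → Infml f (x - f (st x)))
    (n k : ℕ) (hk : 0 < k)
    (v : Fin k → Fin n → ℝ)
    (horth : ∀ i j : Fin k, (∑ c : Fin n, v i c * v j c) = if i = j then 1 else 0)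
    (a : Fin k → K) (hapos : ∀ i, 0 < a i)
    (hratio : ∀ (i : ℕ) (h : i + 1 < k),
      Infml f (a ⟨i + 1, h⟩ / a ⟨i, Nat.lt_of_succ_lt h⟩))
    (x : Fin n → K) (hx : ∀ c, x c = ∑ i : Fin k, a i * f (v i c)) :
    k ≤ n ∧
    (∀ i j : Fin k, i < j → Infml f (a j / a i)) ∧
    ((∀ c, Ltd f (x c)) ↔ Ltd f (a ⟨0, hk⟩)) ∧
    (Ltd f (a ⟨0, hk⟩) → ∀ c, st (x c) = st (a ⟨0, hk⟩) * v ⟨0, hk⟩ c) ∧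
    ((∀ c, Infml f (x c)) ↔ Infml f (a ⟨0, hk⟩)) := by
  have ha : ∀ i, a i ≠ 0 := fun i => (hapos i).ne'
  have hltd : (∀ c, Ltd f (x c)) ↔ ∀ i, Ltd f (a i) :=
    forall_coord_iff_forall_coeff ltd_zero (fun _ _ => Ltd.add) (fun _ r h => h.mul (ltd_map hf r))
      horth hx
  have hinfml : (∀ c, Infml f (x c)) ↔ ∀ i, Infml f (a i) :=
    forall_coord_iff_forall_coeff (infml_zero hf) (fun _ _ => Infml.add)
      (fun _ r h => h.mul_ltd hf (ltd_map hf r)) horth hx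
  refine ⟨by simpa using card_le_of_orthonormal horth, fun i j => infml_div_of_lt hf ha hratio,
    hltd.trans (forall_ltd_iff_ltd_head hf ha hratio hk), fun h₀ c => ?_,
    hinfml.trans (forall_infml_iff_infml_head hf ha hratio hk)⟩
  rw [hx c]
  exact st_sum_eq_of_infml_of_ne hf hst ((forall_ltd_iff_ltd_head hf ha hratio hk).2 h₀)
    fun i hi => infml_of_ltd_head hf ha hratio hk h₀ hi

/-- Properties of the orthogonal decomposition `x = α₁v₁ + ⋯ + α_kv_k` of a point of
`U^n`, where `U = K` is a proper ordered field extension of `ℝ` in which every limited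
element has a standard part `st`: (1) `k ≤ n`; (2) `α_j/α_i` is infinitesimal for
`i < j`; (3) `x` is limited iff `α₁` is, in which case `st x = st α₁ • v₁`;
(4) `x` is infinitesimal iff `α₁` is. -/
theorem stmt10 {K : Type*} [Field K] [LinearOrder K] [IsStrictOrderedRing K] (f : ℝ →+* K) (hf : StrictMono f)
    (hproper : ∃ x : K, ∀ r : ℝ, f r ≠ x)
    (st : K → ℝ)
    (hst : ∀ x : K, Ltd f x → Infml f (x - f (st x)))
    (n k : ℕ) (hk : 0 < k)
    (v : Fin k → Fin n → ℝ)
    (horth : ∀ i j : Fin k, (∑ c : Fin n, v i c * v j c) = if i = j then 1 else 0)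
    (a : Fin k → K) (hapos : ∀ i, 0 < a i)
    (hratio : ∀ (i : ℕ) (h : i + 1 < k),
      Infml f (a ⟨i + 1, h⟩ / a ⟨i, Nat.lt_of_succ_lt h⟩))
    (x : Fin n → K) (hx : ∀ c, x c = ∑ i : Fin k, a i * f (v i c)) :
    k ≤ n ∧
    (∀ i j : Fin k, i < j → Infml f (a j / a i)) ∧
    ((∀ c, Ltd f (x c)) ↔ Ltd f (a ⟨0, hk⟩)) ∧
    (Ltd f (a ⟨0, hk⟩) → ∀ c, st (x c) = st (a ⟨0, hk⟩) * v ⟨0, hk⟩ c) ∧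
    ((∀ c, Infml f (x c)) ↔ Infml f (a ⟨0, hk⟩)) :=
  stmt10_general f hf st hst n k hk v horth a hapos hratio x hx
end

section
/- Let V be a rational subspace of ℝ^n and w ∈ V^⊥ a unit vector. Then there exists a linear map g : ℝ^n → ℝ with integer coefficients such that g(w) < 0 and g(v) = 0 for all v ∈ V. Moreover, if u, w ∈ V^⊥ are two distinct unit vectors, there is such a g with integer coefficients satisfying g(u) > 0, g(w) < 0, and g(v) = 0 for all v ∈ V. -/
/-!
A rational subspace `V` has a rational orthogonal complement: the rational solutions of the
rational linear system cutting out `Vᗮ` already span it over `ℝ`, because linear independence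
over `ℚ` of rational vectors persists over `ℝ`, so the dimensions match. Rational points are then
dense in `Vᗮ`. The open cones `{x | ⟪w, x⟫ < 0}` and `{x | 0 < ⟪u, x⟫} ∩ {x | ⟪w, x⟫ < 0}` meet
`Vᗮ` (at `-w`, resp. at `u - w`, as `⟪u, w⟫ < 1`), hence contain a rational point of `Vᗮ`, and
clearing denominators gives the integer vector `z`.
-/

open Module Submodule Set

section DotOrthogonal

variable {K : Type*} [Field K] {n : ℕ}

def dotOrthogonal (U : Submodule K (Fin n → K)) : Submodule K (Fin n → K) :=
  U.dualAnnihilator.comap (dotProductEquiv K (Fin n)).toLinearMap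

lemma mem_dotOrthogonal {U : Submodule K (Fin n → K)} {p : Fin n → K} :
    p ∈ dotOrthogonal U ↔ ∀ q ∈ U, p ⬝ᵥ q = 0 := by
  simp [dotOrthogonal, Submodule.mem_dualAnnihilator]

lemma finrank_add_finrank_dotOrthogonal (U : Submodule K (Fin n → K)) :
    finrank K U + finrank K (dotOrthogonal U) = n := by
  rw [dotOrthogonal, comap_equiv_eq_map_symm, LinearEquiv.finrank_map_eq,
    Subspace.finrank_add_finrank_dualAnnihilator_eq, finrank_fin_fun]

end DotOrthogonal

section ScalarPoints

variable (K : Type*) [Field K] [Algebra K ℝ] (n : ℕ)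

noncomputable def embedEuclidean : (Fin n → K) →ₗ[K] EuclideanSpace ℝ (Fin n) where
  toFun p := WithLp.toLp 2 fun j => algebraMap K ℝ (p j)
  map_add' p q := by ext j; simp
  map_smul' c p := by ext j; simp [Algebra.smul_def]

variable {K n}

@[simp] lemma embedEuclidean_apply (p : Fin n → K) (j : Fin n) :
    embedEuclidean K n p j = algebraMap K ℝ (p j) := rfl

lemma inner_embedEuclidean (p q : Fin n → K) :
    inner ℝ (embedEuclidean K n p) (embedEuclidean K n q) = algebraMap K ℝ (p ⬝ᵥ q) := by
  simp [PiLp.inner_apply, dotProduct, mul_comm]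

lemma linearIndependent_embedEuclidean {ι : Type*} {v : ι → Fin n → K}
    (hv : LinearIndependent K v) : LinearIndependent ℝ (embedEuclidean K n ∘ v) := by
  have h : LinearIndependent ℝ fun i => algebraMap K ℝ ∘ v i :=
    linearIndependent_algebraMap_comp_iff.mpr hv
  exact h.map' (WithLp.linearEquiv 2 ℝ (Fin n → ℝ)).symm.toLinearMap (LinearEquiv.ker _)

lemma span_embedEuclidean_span (s : Set (Fin n → K)) :
    span ℝ (embedEuclidean K n '' span K s) = span ℝ (embedEuclidean K n '' s) := by
  rw [← Submodule.map_coe, Submodule.map_span, span_span_of_tower]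

lemma finrank_span_embedEuclidean (U : Submodule K (Fin n → K)) :
    finrank ℝ (span ℝ (embedEuclidean K n '' U)) = finrank K U := by
  let b := Module.finBasis K U
  have hb : span K (range fun i => (b i : Fin n → K)) = U :=
    (span_range_subtype_eq_top_iff U fun i => (b i).2).mp b.span_eq
  have hind : LinearIndependent K fun i => (b i : Fin n → K) :=
    b.linearIndependent.map' U.subtype U.ker_subtype
  conv_lhs => rw [← hb, span_embedEuclidean_span, ← range_comp]
  rw [finrank_span_eq_card (linearIndependent_embedEuclidean hind), Fintype.card_fin]

lemma orthogonal_span_embedEuclidean (U : Submodule K (Fin n → K)) :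
    (span ℝ (embedEuclidean K n '' U))ᗮ = span ℝ (embedEuclidean K n '' dotOrthogonal U) := by
  symm
  refine eq_of_le_of_finrank_eq (isOrtho_iff_le.mp (isOrtho_span.mpr ?_)) ?_
  · rintro _ ⟨p, hp, rfl⟩ _ ⟨q, hq, rfl⟩
    rw [inner_embedEuclidean, mem_dotOrthogonal.mp hp q hq, map_zero]
  · have h₁ := finrank_add_finrank_dotOrthogonal U
    have h₂ := (span ℝ (embedEuclidean K n '' U)).finrank_add_finrank_orthogonal
    rw [finrank_euclideanSpace_fin, finrank_span_embedEuclidean] at h₂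
    rw [finrank_span_embedEuclidean]
    omega

end ScalarPoints

section RationalDensity

variable {E : Type*} [AddCommGroup E] [Module ℝ E] [Module ℚ E] [IsScalarTower ℚ ℝ E]
  [TopologicalSpace E] [ContinuousSMul ℝ E]

lemma real_smul_mem_closure_span_rat {s : Set E} (c : ℝ) {x : E}
    (hx : x ∈ closure (span ℚ s : Set E)) : c • x ∈ closure (span ℚ s : Set E) := by
  refine Rat.denseRange_cast.induction_on c
    (isClosed_closure.preimage (continuous_id.smul continuous_const)) fun q => ?_
  have hq : Set.MapsTo (fun y : E => (q : ℝ) • y) (span ℚ s) (span ℚ s) := fun y hy => by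
    change (q : ℝ) • y ∈ span ℚ s
    rw [← eq_ratCast (algebraMap ℚ ℝ), algebraMap_smul]
    exact (span ℚ s).smul_mem q hy
  exact hq.closure (continuous_const_smul _) hx

lemma span_real_subset_closure_span_rat [IsTopologicalAddGroup E] (s : Set E) :
    (span ℝ s : Set E) ⊆ closure (span ℚ s) := fun x hx => by
  induction hx using Submodule.span_induction with
  | mem x hx => exact subset_closure (subset_span hx)
  | zero => exact subset_closure (zero_mem _)
  | add x y _ _ hx hy => exact (span ℚ s).toAddSubgroup.topologicalClosure.add_mem hx hy
  | smul c x _ hx => exact real_smul_mem_closure_span_rat c hx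

end RationalDensity

lemma exists_pos_nat_mul_eq_intCast {ι : Type*} [Fintype ι] (p : ι → ℚ) :
    ∃ d : ℕ, 0 < d ∧ ∃ z : ι → ℤ, ∀ j, (z j : ℚ) = d * p j := by
  choose k hk using fun j => Finset.dvd_prod_of_mem (fun j => (p j).den) (Finset.mem_univ j)
  refine ⟨∏ j, (p j).den, Finset.prod_pos fun j _ => (p j).pos, fun j => (p j).num * k j,
    fun j => ?_⟩
  push_cast [hk j, ← Rat.mul_den_eq_num]
  ring

section IntegerFunctionals

variable {n : ℕ}

lemma exists_span_embedEuclidean_eq {s : Set (EuclideanSpace ℝ (Fin n))}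
    (hs : ∀ x ∈ s, ∀ j, ∃ q : ℚ, x j = (q : ℝ)) :
    ∃ U : Submodule ℚ (Fin n → ℚ), span ℝ (embedEuclidean ℚ n '' U) = span ℝ s := by
  refine ⟨span ℚ (embedEuclidean ℚ n ⁻¹' s), ?_⟩
  rw [span_embedEuclidean_span, image_preimage_eq_of_subset fun x hx => ?_]
  choose q hq using hs x hx
  exact ⟨q, by ext j; simp [hq]⟩

lemma span_embedEuclidean_subset_closure (U : Submodule ℚ (Fin n → ℚ)) :
    (span ℝ (embedEuclidean ℚ n '' U) : Set (EuclideanSpace ℝ (Fin n))) ⊆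
      closure (embedEuclidean ℚ n '' U) := by
  have h := span_real_subset_closure_span_rat (embedEuclidean ℚ n '' U)
  rwa [← map_coe, span_eq] at h

lemma exists_intCast_mem_orthogonal (U : Submodule ℚ (Fin n → ℚ))
    {O : Set (EuclideanSpace ℝ (Fin n))} (hO : IsOpen O)
    (hcone : ∀ c : ℝ, 0 < c → ∀ x ∈ O, c • x ∈ O)
    (hne : (O ∩ (span ℝ (embedEuclidean ℚ n '' U))ᗮ).Nonempty) :
    ∃ z : Fin n → ℤ,
      WithLp.toLp 2 (fun j => (z j : ℝ)) ∈ O ∩ (span ℝ (embedEuclidean ℚ n '' U))ᗮ := by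
  rw [orthogonal_span_embedEuclidean] at hne ⊢
  obtain ⟨x, hxO, hx⟩ := hne
  obtain ⟨_, hpO, p, hp, rfl⟩ :=
    mem_closure_iff.mp (span_embedEuclidean_subset_closure _ hx) O hO hxO
  obtain ⟨d, hd, z, hz⟩ := exists_pos_nat_mul_eq_intCast p
  have hzp : WithLp.toLp 2 (fun j => (z j : ℝ)) = (d : ℝ) • embedEuclidean ℚ n p := by
    ext j
    simpa using congrArg (Rat.cast : ℚ → ℝ) (hz j)
  refine ⟨z, ?_⟩
  rw [hzp]
  exact ⟨hcone _ (by exact_mod_cast hd) _ hpO, smul_mem _ _ (subset_span ⟨p, hp, rfl⟩)⟩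

end IntegerFunctionals

lemma sum_mul_intCast_eq_inner {n : ℕ} (v : EuclideanSpace ℝ (Fin n)) (z : Fin n → ℤ) :
    ∑ j, v j * (z j : ℝ) = inner ℝ v (WithLp.toLp 2 fun j => (z j : ℝ)) := by
  simp [PiLp.inner_apply, mul_comm]

/-- Separation of unit vectors in the orthogonal complement of a *rational* subspace
`V ⊆ ℝ^n` by linear functionals with integer coefficients (`x ↦ ∑ j, x j * z j` with
`z ∈ ℤ^n`) vanishing on `V`. -/
theorem stmt16 (n : ℕ) (V : Submodule ℝ (EuclideanSpace ℝ (Fin n)))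
    (hV : ∃ s : Set (EuclideanSpace ℝ (Fin n)),
      (∀ x ∈ s, ∀ j, ∃ q : ℚ, x j = (q : ℝ)) ∧ Submodule.span ℝ s = V) :
    (∀ w ∈ Vᗮ, ‖w‖ = 1 → ∃ z : Fin n → ℤ,
      (∑ j, w j * (z j : ℝ)) < 0 ∧ ∀ v ∈ V, (∑ j, v j * (z j : ℝ)) = 0) ∧
    (∀ u ∈ Vᗮ, ∀ w ∈ Vᗮ, ‖u‖ = 1 → ‖w‖ = 1 → u ≠ w → ∃ z : Fin n → ℤ,
      0 < (∑ j, u j * (z j : ℝ)) ∧ (∑ j, w j * (z j : ℝ)) < 0 ∧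
      ∀ v ∈ V, (∑ j, v j * (z j : ℝ)) = 0) := by
  obtain ⟨s, hs, rfl⟩ := hV
  obtain ⟨U, hU⟩ := exists_span_embedEuclidean_eq hs
  rw [← hU]
  simp only [sum_mul_intCast_eq_inner]
  refine ⟨fun w hw hw1 => ?_, fun u hu w hw hu1 hw1 huw => ?_⟩
  · obtain ⟨z, hzw, hzV⟩ := exists_intCast_mem_orthogonal U (O := {x | inner ℝ w x < 0})
      (isOpen_lt (continuous_const.inner continuous_id) continuous_const)
      (fun c hc x hx => by simpa [inner_smul_right] using mul_neg_of_pos_of_neg hc hx)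
      ⟨-w, by simp [hw1], neg_mem hw⟩
    exact ⟨z, hzw, fun v hv => inner_right_of_mem_orthogonal hv hzV⟩
  · have huw1 : inner ℝ u w < 1 := (inner_lt_one_iff_real_of_norm_eq_one hu1 hw1).mpr huw
    obtain ⟨z, ⟨hzu, hzw⟩, hzV⟩ := exists_intCast_mem_orthogonal U
      (O := {x | 0 < inner ℝ u x} ∩ {x | inner ℝ w x < 0})
      ((isOpen_lt continuous_const (continuous_const.inner continuous_id)).inter
        (isOpen_lt (continuous_const.inner continuous_id) continuous_const))
      (fun c hc x hx => by
        simpa [inner_smul_right] using ⟨mul_pos hc hx.1, mul_neg_of_pos_of_neg hc hx.2⟩)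
      ⟨u - w, by simp [inner_sub_right, hu1, hw1, real_inner_comm u w, huw1], sub_mem hu hw⟩
    exact ⟨z, hzu, hzw, fun v hv => inner_right_of_mem_orthogonal hv hzV⟩
end

section
/- Let (v₁,…,v_k) be a tuple of orthonormal vectors of ℝ^n and define recursively w₁ = v₁ and, for 1 < i ≤ k, w_i equal to the orthogonal projection of v_i onto the orthogonal complement of the rational envelope ⟨⟨w₁,…,w_{i−1}⟩⟩ (the smallest subspace of ℝ^n containing w₁,…,w_{i−1} that has a basis of rational vectors). Then for each i ≤ k: v_i − w_i lies in ⟨⟨w₁,…,w_{i−1}⟩⟩, and the rational envelopes satisfy ⟨⟨v₁,…,v_i⟩⟩ = ⟨⟨w₁,…,w_i⟩⟩. -/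
def IsRatSubspace (n : ℕ) (V : Submodule ℝ (EuclideanSpace ℝ (Fin n))) : Prop :=
  ∃ s : Set (EuclideanSpace ℝ (Fin n)),
    (∀ x ∈ s, ∀ j, ∃ q : ℚ, x j = (q : ℝ)) ∧ Submodule.span ℝ s = V

/-- The rational envelope `⟨⟨S⟩⟩`. -/
def ratEnv (n : ℕ) (S : Set (EuclideanSpace ℝ (Fin n))) :
    Submodule ℝ (EuclideanSpace ℝ (Fin n)) :=
  sInf {V | IsRatSubspace n V ∧ S ⊆ V}

/-!
The identity `v_i - w_i ∈ ⟨⟨w_j : j < i⟩⟩` is just `v - P_{Kᗮ} v = P_K v ∈ K`.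
The equality of envelopes uses nothing about rational envelopes beyond their being a closure
operator with values in subspaces: `v_i = w_i + (v_i - w_i)` puts `v_i` in `⟨⟨w_j : j ≤ i⟩⟩`,
and conversely, by strong induction on `i`, `w_i = v_i - (v_i - w_i)` lies in `⟨⟨v_j : j ≤ i⟩⟩`.
-/

open Set

section RatEnv

variable {n : ℕ}

lemma subset_ratEnv (S : Set (EuclideanSpace ℝ (Fin n))) : S ⊆ ratEnv n S :=
  fun _ hx => Submodule.mem_sInf.mpr fun _ hV => hV.2 hx

lemma ratEnv_le {S T : Set (EuclideanSpace ℝ (Fin n))} (h : S ⊆ ratEnv n T) :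
    ratEnv n S ≤ ratEnv n T :=
  le_sInf fun _ hV => sInf_le ⟨hV.1, h.trans fun _ hx => Submodule.mem_sInf.mp hx _ hV⟩

lemma ratEnv_mono {S T : Set (EuclideanSpace ℝ (Fin n))} (h : S ⊆ T) :
    ratEnv n S ≤ ratEnv n T :=
  ratEnv_le (h.trans (subset_ratEnv T))

variable {ι : Type*} [LinearOrder ι] (f : ι → EuclideanSpace ℝ (Fin n))

lemma ratEnv_image_Iio_le_Iic (i : ι) : ratEnv n (f '' Iio i) ≤ ratEnv n (f '' Iic i) :=
  ratEnv_mono (image_mono Iio_subset_Iic_self)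

lemma monotone_ratEnv_image_Iic : Monotone fun i => ratEnv n (f '' Iic i) :=
  fun _ _ hij => ratEnv_mono (image_mono (Iic_subset_Iic.mpr hij))

variable {v w : ι → EuclideanSpace ℝ (Fin n)} (hvw : ∀ i, v i - w i ∈ ratEnv n (w '' Iio i))
include hvw

lemma mem_ratEnv_image_Iic_of_sub_mem (i : ι) : v i ∈ ratEnv n (w '' Iic i) := by
  rw [← add_sub_cancel (w i) (v i)]
  exact add_mem (subset_ratEnv _ ⟨i, self_mem_Iic, rfl⟩) (ratEnv_image_Iio_le_Iic w i (hvw i))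

lemma mem_ratEnv_image_Iic_of_sub_mem_rev [WellFoundedLT ι] (i : ι) :
    w i ∈ ratEnv n (v '' Iic i) := by
  induction i using WellFoundedLT.induction with
  | _ i ih =>
    have hw : ratEnv n (w '' Iio i) ≤ ratEnv n (v '' Iic i) :=
      ratEnv_le <| by
        rintro _ ⟨j, hj, rfl⟩
        exact monotone_ratEnv_image_Iic v hj.le (ih j hj)
    rw [← sub_sub_cancel (v i) (w i)]
    exact sub_mem (subset_ratEnv _ ⟨i, self_mem_Iic, rfl⟩) (hw (hvw i))

theorem ratEnv_image_Iic_eq_of_sub_mem [WellFoundedLT ι] (i : ι) :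
    ratEnv n (v '' Iic i) = ratEnv n (w '' Iic i) := by
  apply le_antisymm <;> apply ratEnv_le <;> rintro _ ⟨j, hj, rfl⟩
  · exact monotone_ratEnv_image_Iic w hj (mem_ratEnv_image_Iic_of_sub_mem hvw j)
  · exact monotone_ratEnv_image_Iic v hj (mem_ratEnv_image_Iic_of_sub_mem_rev hvw j)

end RatEnv

lemma Submodule.sub_orthogonalProjectionOnto_orthogonal_mem {𝕜 E : Type*} [RCLike 𝕜]
    [NormedAddCommGroup E] [InnerProductSpace 𝕜 E] (K : Submodule 𝕜 E)
    [K.HasOrthogonalProjection] (v : E) : v - (Kᗮ.orthogonalProjectionOnto v : E) ∈ K := by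
  rw [orthogonalProjectionOnto_orthogonal, coe_mk, sub_sub_cancel]
  exact K.starProjection_apply_mem v

theorem stmt17_general (n k : ℕ) (v w : Fin k → EuclideanSpace ℝ (Fin n))
    (hw0 : ∀ h : 0 < k, w ⟨0, h⟩ = v ⟨0, h⟩)
    (hwi : ∀ i : Fin k, 0 < i.val →
      w i = (Submodule.orthogonalProjectionOnto ((ratEnv n (w '' {j | j < i}))ᗮ) (v i) :
        EuclideanSpace ℝ (Fin n))) :
    ∀ i : Fin k,
      v i - w i ∈ ratEnv n (w '' {j | j < i}) ∧
      ratEnv n (v '' {j | j ≤ i}) = ratEnv n (w '' {j | j ≤ i}) := by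
  have hvw : ∀ i : Fin k, v i - w i ∈ ratEnv n (w '' Iio i) := by
    rintro ⟨_ | m, hm⟩
    · rw [hw0 hm, sub_self]
      exact zero_mem _
    · rw [hwi _ m.succ_pos]
      exact Submodule.sub_orthogonalProjectionOnto_orthogonal_mem _ _
  exact fun i => ⟨hvw i, ratEnv_image_Iic_eq_of_sub_mem hvw i⟩

/-- Gram–Schmidt-like reduction of an index relative to rational envelopes: with
`w₁ = v₁` and `w_i` the orthogonal projection of `v_i` onto `⟨⟨w₁,…,w_{i-1}⟩⟩ᗮ`, one has
`v_i - w_i ∈ ⟨⟨w₁,…,w_{i-1}⟩⟩` and `⟨⟨v₁,…,v_i⟩⟩ = ⟨⟨w₁,…,w_i⟩⟩` for each `i`. -/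
theorem stmt17 (n k : ℕ) (v w : Fin k → EuclideanSpace ℝ (Fin n))
    (horth : ∀ i j : Fin k, (inner ℝ (v i) (v j) : ℝ) = if i = j then 1 else 0)
    (hw0 : ∀ h : 0 < k, w ⟨0, h⟩ = v ⟨0, h⟩)
    (hwi : ∀ i : Fin k, 0 < i.val →
      w i = (Submodule.orthogonalProjectionOnto ((ratEnv n (w '' {j | j < i}))ᗮ) (v i) :
        EuclideanSpace ℝ (Fin n))) :
    ∀ i : Fin k,
      v i - w i ∈ ratEnv n (w '' {j | j < i}) ∧
      ratEnv n (v '' {j | j ≤ i}) = ratEnv n (w '' {j | j ≤ i}) :=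
  stmt17_general n k v w hw0 hwi
end

section
/- Let U be an ordered field extension of ℝ containing infinitesimals, let (v₁,…,v_k) be orthonormal vectors of ℝ^n, let t ≤ k, and let α₁,…,α_t ∈ U be strictly positive with α_j/α_i infinitesimal whenever i < j. Then for any positive reals r₁,…,r_k there exist β₁,…,β_k ≥ 0 in U such that α₁v₁ + ⋯ + α_tv_t = β₁(r₁v₁) + β₂(r₁v₁ + r₂v₂) + ⋯ + β_k(r₁v₁ + ⋯ + r_kv_k) in U^n. -/
/-!
Put `s_i = α_i / r_i` for `i < t` and `s_i = 0` otherwise. Since `α_{i+1}/α_i` is smaller than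
the positive real `r_{i+1}/r_i`, the sequence `s` is nonincreasing and nonnegative, so
`β_j = s_j - s_{j+1}` is nonnegative. Abel summation turns `∑ β_j (r₁v₁ + ⋯ + r_jv_j)`
into `∑ s_i r_i v_i = α₁v₁ + ⋯ + α_tv_t`.
-/

open Finset

theorem Finset.sum_Ico_sub_succ {G : Type*} [AddCommGroup G] (s : ℕ → G) {m n : ℕ}
    (h : m ≤ n) :
    ∑ j ∈ Ico m n, (s j - s (j + 1)) = s m - s n := by
  rw [sum_Ico_eq_sub _ h, sum_range_sub', sum_range_sub']
  abel

theorem Fin.sum_filter_le_sub_succ {G : Type*} [AddCommGroup G] {k : ℕ} (s : ℕ → G)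
    (i : Fin k) :
    ∑ j ∈ univ.filter (fun j : Fin k => i ≤ j), (s j - s (j + 1)) = s i - s k := by
  rw [sum_filter]
  refine (Fin.sum_univ_eq_sum_range
    (fun j => if (i : ℕ) ≤ j then s j - s (j + 1) else 0) k).trans ?_
  rw [← sum_filter, ← Nat.Ico_zero_eq_range, Ico_filter_le, max_eq_right (Nat.zero_le _),
    sum_Ico_sub_succ s i.isLt.le]

theorem Fin.sum_sub_succ_smul_sum_filter_le {R M : Type*} [CommRing R] [AddCommMonoid M]
    [Module R M] {k : ℕ} (s : ℕ → R) (hs : s k = 0) (w : Fin k → M) :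
    ∑ j : Fin k, (s j - s (j + 1)) • ∑ i ∈ univ.filter (fun i : Fin k => i ≤ j), w i =
      ∑ i : Fin k, s i • w i := by
  simp only [sum_filter, smul_sum, smul_ite, smul_zero]
  rw [sum_comm]
  refine sum_congr rfl fun i _ => ?_
  rw [← sum_filter, ← sum_smul, Fin.sum_filter_le_sub_succ, hs, sub_zero]

section ExtendByZero

variable {M : Type*} [Zero M] {t : ℕ}

def Fin.extendByZero (g : Fin t → M) (i : ℕ) : M :=
  if h : i < t then g ⟨i, h⟩ else 0

@[simp]
theorem Fin.extendByZero_val (g : Fin t → M) (i : Fin t) : Fin.extendByZero g i = g i := by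
  simp [Fin.extendByZero]

theorem Fin.extendByZero_of_le (g : Fin t → M) {i : ℕ} (h : t ≤ i) :
    Fin.extendByZero g i = 0 := by
  simp [Fin.extendByZero, h]

theorem Fin.antitone_extendByZero [Preorder M] {g : Fin t → M}
    (hg : Antitone g) (h0 : ∀ i, 0 ≤ g i) : Antitone (Fin.extendByZero g) := by
  refine antitone_nat_of_succ_le fun i => ?_
  by_cases h : i + 1 < t
  · simp only [Fin.extendByZero, h, dif_pos, Nat.lt_of_succ_lt h]
    exact hg (Fin.mk_le_mk.2 i.le_succ)
  · rw [Fin.extendByZero_of_le g (not_lt.1 h)]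
    unfold Fin.extendByZero
    split_ifs
    exacts [h0 _, le_rfl]

end ExtendByZero

theorem Fin.sum_extendByZero_smul {R M : Type*} [Semiring R] [AddCommMonoid M] [Module R M]
    {t k : ℕ} (ht : t ≤ k) (g : Fin t → R) (w : Fin k → M) :
    ∑ j : Fin k, Fin.extendByZero g j • w j = ∑ i : Fin t, g i • w (Fin.castLE ht i) :=
  (Fintype.sum_of_injective _ (Fin.castLE_injective ht) _ _
    (fun j hj => by
      rw [Fin.range_castLE, Set.mem_ofPred_eq, not_lt] at hj
      rw [Fin.extendByZero_of_le g hj, zero_smul])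
    (fun i => by simp)).symm

theorem RingHom.map_pos_of_strictMono {K : Type*} [Semiring K] [Preorder K] {f : ℝ →+* K}
    (hf : StrictMono f) {p : ℝ} (hp : 0 < p) : 0 < f p := by
  simpa using hf hp

theorem Infml.div_map_lt_div_map {K : Type*} [Field K] [LinearOrder K] [IsStrictOrderedRing K]
    {f : ℝ →+* K} (hf : StrictMono f) {x y : K} (hx : 0 < x) (hy : 0 < y)
    (h : Infml f (y / x)) {p q : ℝ} (hp : 0 < p) (hq : 0 < q) : y / f q < x / f p := by
  have hfp := RingHom.map_pos_of_strictMono hf hp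
  have hfq := RingHom.map_pos_of_strictMono hf hq
  have hlt := h (q / p) (div_pos hq hp)
  rw [abs_of_pos (div_pos hy hx), map_div₀, div_lt_div_iff₀ hx hfp] at hlt
  rw [div_lt_div_iff₀ hfq hfp]
  linarith

theorem stmt18_general {K : Type*} [Field K] [LinearOrder K] [IsStrictOrderedRing K] (f : ℝ →+* K) (hf : StrictMono f)
    (n k t : ℕ) (ht : t ≤ k)
    (v : Fin k → Fin n → ℝ)
    (a : Fin t → K) (hapos : ∀ i, 0 < a i)
    (hratio : ∀ i j : Fin t, i < j → Infml f (a j / a i))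
    (r : Fin k → ℝ) (hr : ∀ i, 0 < r i) :
    ∃ b : Fin k → K, (∀ j, 0 ≤ b j) ∧
      ∀ c : Fin n,
        (∑ i : Fin t, a i * f (v (Fin.castLE ht i) c)) =
          ∑ j : Fin k, b j *
            f (∑ i ∈ Finset.univ.filter (fun i : Fin k => i ≤ j), r i * v i c) := by
  set g : Fin t → K := fun i => a i / f (r (Fin.castLE ht i))
  have hfr (i : Fin k) : 0 < f (r i) := RingHom.map_pos_of_strictMono hf (hr i)
  have hg_pos (i : Fin t) : 0 < g i := div_pos (hapos i) (hfr _)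
  have hg_anti : Antitone g := fun i j hij => hij.eq_or_lt.elim (fun h => h ▸ le_rfl)
    fun h => ((hratio i j h).div_map_lt_div_map hf (hapos i) (hapos j) (hr _) (hr _)).le
  set s := Fin.extendByZero g
  have hs := Fin.antitone_extendByZero hg_anti fun i => (hg_pos i).le
  refine ⟨fun j => s j - s (j + 1), fun j => sub_nonneg.2 (hs j.val.le_succ), fun c => ?_⟩
  calc ∑ i : Fin t, a i * f (v (Fin.castLE ht i) c)
      = ∑ i : Fin t, g i • f (r (Fin.castLE ht i) * v (Fin.castLE ht i) c) := by
        refine sum_congr rfl fun i _ => ?_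
        simp only [g, smul_eq_mul, map_mul]
        rw [← mul_assoc, div_mul_cancel₀ _ (hfr _).ne']
    _ = ∑ j : Fin k, s j • f (r j * v j c) :=
        (Fin.sum_extendByZero_smul ht g fun j => f (r j * v j c)).symm
    _ = ∑ j : Fin k, (s j - s (j + 1)) • ∑ i ∈ univ.filter (· ≤ j), f (r i * v i c) :=
        (Fin.sum_sub_succ_smul_sum_filter_le s (Fin.extendByZero_of_le g ht) _).symm
    _ = _ := by simp only [smul_eq_mul, map_sum]

/-- Let `K` be an ordered field extension of `ℝ` containing a nonzero infinitesimal,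
`v₁,…,v_k` orthonormal in `ℝ^n`, `t ≤ k`, and `α₁,…,α_t > 0` in `K` with `α_j/α_i`
infinitesimal for `i < j`.  Then for any positive reals `r₁,…,r_k` there are
`β₁,…,β_k ≥ 0` in `K` with
`α₁v₁ + ⋯ + α_tv_t = β₁(r₁v₁) + β₂(r₁v₁+r₂v₂) + ⋯ + β_k(r₁v₁+⋯+r_kv_k)` in `K^n`. -/
theorem stmt18 {K : Type*} [Field K] [LinearOrder K] [IsStrictOrderedRing K] (f : ℝ →+* K) (hf : StrictMono f)
    (hinf : ∃ x : K, x ≠ 0 ∧ Infml f x)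
    (n k t : ℕ) (ht : t ≤ k)
    (v : Fin k → Fin n → ℝ)
    (horth : ∀ i j : Fin k, (∑ c : Fin n, v i c * v j c) = if i = j then 1 else 0)
    (a : Fin t → K) (hapos : ∀ i, 0 < a i)
    (hratio : ∀ i j : Fin t, i < j → Infml f (a j / a i))
    (r : Fin k → ℝ) (hr : ∀ i, 0 < r i) :
    ∃ b : Fin k → K, (∀ j, 0 ≤ b j) ∧
      ∀ c : Fin n,
        (∑ i : Fin t, a i * f (v (Fin.castLE ht i) c)) =
          ∑ j : Fin k, b j *
            f (∑ i ∈ Finset.univ.filter (fun i : Fin k => i ≤ j), r i * v i c) :=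
  stmt18_general f hf n k t ht v a hapos hratio r hr
end

section
/- Let U be an ordered field extension of ℝ, let v₁,…,v_n be a basis of ℝ^n (hence of U^n over U), let k ≤ n, and let x = α₁v₁ + ⋯ + α_nv_n ∈ U^n. Suppose that for every choice of positive reals r₁,…,r_k there exist β₁,…,β_k ≥ 0 in U with x = β₁(r₁v₁) + β₂(r₁v₁ + r₂v₂) + ⋯ + β_k(r₁v₁ + ⋯ + r_kv_k). Then α_i ≥ 0 for all i, α_i = 0 for i > k, α_j ≤ α_i whenever i ≤ j ≤ k, and if t is the largest index with α_t ≠ 0 then α_{i+1}/α_i is a positive infinitesimal for every i < t. -/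
open Finset Function

section TailSum

variable {ι R : Type*} [Fintype ι] [Preorder ι] [DecidableLE ι]

def tailSum [AddCommMonoid R] (b : ι → R) (i : ι) : R :=
  ∑ j ∈ univ.filter (i ≤ ·), b j

theorem sum_mul_sum_filter_le_eq_sum_tailSum_mul [CommSemiring R] (b w : ι → R) :
    ∑ j, b j * ∑ i ∈ univ.filter (· ≤ j), w i = ∑ i, tailSum b i * w i := by
  simp_rw [mul_sum, tailSum, sum_mul]
  exact sum_comm' (by simp)

variable [AddCommMonoid R] [PartialOrder R] [IsOrderedAddMonoid R] {b : ι → R}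

theorem tailSum_nonneg (hb : ∀ j, 0 ≤ b j) (i : ι) : 0 ≤ tailSum b i :=
  sum_nonneg fun j _ => hb j

theorem tailSum_antitone (hb : ∀ j, 0 ≤ b j) : Antitone (tailSum b) := fun i j hij =>
  sum_le_sum_of_subset_of_nonneg
    (fun l hl => by simp only [mem_filter, mem_univ, true_and] at hl ⊢; exact hij.trans hl)
    fun l _ _ => hb l

end TailSum

theorem Matrix.vecMul_map_injective {m F S : Type*} [Fintype m] [DecidableEq m] [Field F]
    [Semiring S] (f : F →+* S) {M : Matrix m m F} (hM : LinearIndependent F M.row) :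
    Injective fun g => Matrix.vecMul g (M.map f) :=
  vecMul_injective_of_isUnit (f.mapMatrix.isUnit_map (linearIndependent_rows_iff_isUnit.mp hM))

theorem Fin.extend_castLE_of_lt {α : Type*} {k n : ℕ} (hk : k ≤ n) (g : Fin k → α)
    (e : Fin n → α) {i : Fin n} (hi : i.val < k) : extend (castLE hk) g e i = g ⟨i, hi⟩ :=
  (castLE_injective hk).extend_apply g e ⟨i, hi⟩

theorem Fin.extend_castLE_of_le {α : Type*} {k n : ℕ} (hk : k ≤ n) (g : Fin k → α)
    (e : Fin n → α) {i : Fin n} (hi : k ≤ i.val) : extend (castLE hk) g e i = e i :=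
  extend_apply' g e i fun ⟨j, hj⟩ => by
    have := j.isLt
    rw [← hj, val_castLE] at hi
    omega

theorem Real.strictMono_ringHom {K : Type*} [Field K] [LinearOrder K] [IsStrictOrderedRing K]
    (f : ℝ →+* K) : StrictMono f :=
  (ringHom_monotone (fun _ => Real.isSquare_iff.mpr) f).strictMono_of_injective f.injective

theorem infml_of_forall_le {K : Type*} [Field K] [LinearOrder K] [IsStrictOrderedRing K]
    (f : ℝ →+* K) {x : K} (hx : 0 ≤ x) (h : ∀ ε : ℝ, 0 < ε → x ≤ f ε) : Infml f x :=
  fun r hr => by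
    rw [abs_of_nonneg hx]
    exact (h _ (half_pos hr)).trans_lt (Real.strictMono_ringHom f (half_lt_self hr))

theorem eq_extend_tailSum_of_sum_eq {F S : Type*} [Field F] [CommRing S] (f : F →+* S)
    {n k : ℕ} (hk : k ≤ n) {v : Fin n → Fin n → F} (hli : LinearIndependent F v)
    {a : Fin n → S} (r : Fin k → F) (b : Fin k → S)
    (h : ∀ c, ∑ i, a i * f (v i c) =
      ∑ j, b j * f (∑ i ∈ univ.filter (· ≤ j), r i * v (Fin.castLE hk i) c)) :
    a = extend (Fin.castLE hk) (fun i => f (r i) * tailSum b i) 0 := by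
  refine Matrix.vecMul_map_injective f (M := Matrix.of v) hli (funext fun c => ?_)
  change ∑ i, a i * f (v i c) = ∑ m, extend (Fin.castLE hk) _ 0 m * f (v m c)
  calc ∑ i, a i * f (v i c)
      = ∑ j, b j * ∑ i ∈ univ.filter (· ≤ j), f (r i) * f (v (Fin.castLE hk i) c) := by
        simp only [h c, map_sum, map_mul]
    _ = ∑ i, tailSum b i * (f (r i) * f (v (Fin.castLE hk i) c)) :=
        sum_mul_sum_filter_le_eq_sum_tailSum_mul _ _
    _ = ∑ m, extend (Fin.castLE hk) (fun i => f (r i) * tailSum b i) 0 m * f (v m c) :=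
        Fintype.sum_of_injective _ (Fin.castLE_injective hk) _ _
          (fun m hm => by rw [extend_apply' _ _ _ hm, Pi.zero_apply, zero_mul])
          fun i => by rw [(Fin.castLE_injective hk).extend_apply]; ring

/-- The vector `∑ aᵢ vᵢ` of `K^n` lies in the cone spanned by `r₁v₁, r₁v₁ + r₂v₂, …,
r₁v₁ + ⋯ + r_kv_k` for every choice of positive reals `r`. -/
def IsInFlagCones {K : Type*} [Field K] [LinearOrder K] (f : ℝ →+* K) {n k : ℕ} (hk : k ≤ n)
    (v : Fin n → Fin n → ℝ) (a : Fin n → K) : Prop :=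
  ∀ r : Fin k → ℝ, (∀ i, 0 < r i) → ∃ b : Fin k → K, (∀ j, 0 ≤ b j) ∧
    ∀ c : Fin n, (∑ i : Fin n, a i * f (v i c)) =
      ∑ j : Fin k, b j *
        f (∑ i ∈ univ.filter (fun i : Fin k => i ≤ j), r i * v (Fin.castLE hk i) c)

namespace IsInFlagCones

variable {K : Type*} [Field K] [LinearOrder K] {f : ℝ →+* K} {n k : ℕ} {hk : k ≤ n}
  {v : Fin n → Fin n → ℝ} {a : Fin n → K}

theorem exists_eq_extend_tailSum (hx : IsInFlagCones f hk v a) (hli : LinearIndependent ℝ v)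
    (r : Fin k → ℝ) (hr : ∀ i, 0 < r i) :
    ∃ b : Fin k → K, (∀ j, 0 ≤ b j) ∧
      a = extend (Fin.castLE hk) (fun i => f (r i) * tailSum b i) 0 := by
  obtain ⟨b, hb, h⟩ := hx r hr
  exact ⟨b, hb, eq_extend_tailSum_of_sum_eq f hk hli r b h⟩

theorem exists_eq_extend_tailSum_one (hx : IsInFlagCones f hk v a)
    (hli : LinearIndependent ℝ v) :
    ∃ b : Fin k → K, (∀ j, 0 ≤ b j) ∧ a = extend (Fin.castLE hk) (tailSum b) 0 := by
  obtain ⟨b, hb, h⟩ := hx.exists_eq_extend_tailSum hli 1 fun _ => one_pos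
  simp only [Pi.one_apply, map_one, one_mul] at h
  exact ⟨b, hb, h⟩

theorem apply_eq_zero_of_le (hx : IsInFlagCones f hk v a) (hli : LinearIndependent ℝ v)
    {i : Fin n} (hi : k ≤ i.val) : a i = 0 := by
  obtain ⟨b, -, rfl⟩ := hx.exists_eq_extend_tailSum_one hli
  exact Fin.extend_castLE_of_le hk _ _ hi

variable [IsStrictOrderedRing K]

theorem apply_nonneg (hx : IsInFlagCones f hk v a) (hli : LinearIndependent ℝ v) (i : Fin n) :
    0 ≤ a i := by
  obtain ⟨b, hb, rfl⟩ := hx.exists_eq_extend_tailSum_one hli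
  rcases lt_or_ge i.val k with hi | hi
  · rw [Fin.extend_castLE_of_lt hk _ _ hi]
    exact tailSum_nonneg hb _
  · rw [Fin.extend_castLE_of_le hk _ _ hi]
    rfl

theorem apply_antitone (hx : IsInFlagCones f hk v a) (hli : LinearIndependent ℝ v)
    {i j : Fin n} (hij : i ≤ j) (hj : j.val < k) : a j ≤ a i := by
  obtain ⟨b, hb, rfl⟩ := hx.exists_eq_extend_tailSum_one hli
  have hi : i.val < k := (Fin.le_def.mp hij).trans_lt hj
  rw [Fin.extend_castLE_of_lt hk _ _ hj, Fin.extend_castLE_of_lt hk _ _ hi]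
  exact tailSum_antitone hb hij

theorem apply_le_map_mul_apply (hx : IsInFlagCones f hk v a) (hli : LinearIndependent ℝ v)
    {i j : Fin n} (hij : i < j) (hj : j.val < k) {ε : ℝ} (hε : 0 < ε) :
    a j ≤ f ε * a i := by
  have hi : i.val < k := (Fin.lt_def.mp hij).trans hj
  let r : Fin k → ℝ := update 1 ⟨j, hj⟩ ε
  have hr : ∀ l, 0 < r l := fun l => by
    unfold r
    rcases eq_or_ne l ⟨j, hj⟩ with rfl | hl
    · rwa [update_self]
    · rw [update_of_ne hl]; exact one_pos
  obtain ⟨b, hb, rfl⟩ := hx.exists_eq_extend_tailSum hli r hr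
  have hji : (⟨i, hi⟩ : Fin k) ≠ ⟨j, hj⟩ := fun h => hij.ne (Fin.ext (Fin.mk.inj h))
  rw [Fin.extend_castLE_of_lt hk _ _ hj, Fin.extend_castLE_of_lt hk _ _ hi]
  simp only [r, update_self, update_of_ne hji, Pi.one_apply, map_one, one_mul]
  exact mul_le_mul_of_nonneg_left (tailSum_antitone hb hij.le)
    ((map_zero f).symm.trans_le ((Real.strictMono_ringHom f).monotone hε.le))

end IsInFlagCones

theorem stmt19_general {K : Type*} [Field K] [LinearOrder K] [IsStrictOrderedRing K] (f : ℝ →+* K)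
    (n k : ℕ) (hk : k ≤ n)
    (v : Fin n → Fin n → ℝ)
    (hli : LinearIndependent ℝ v)
    (a : Fin n → K)
    (hx : ∀ r : Fin k → ℝ, (∀ i, 0 < r i) → ∃ b : Fin k → K, (∀ j, 0 ≤ b j) ∧
      ∀ c : Fin n,
        (∑ i : Fin n, a i * f (v i c)) =
          ∑ j : Fin k, b j *
            f (∑ i ∈ Finset.univ.filter (fun i : Fin k => i ≤ j),
                r i * v (Fin.castLE hk i) c)) :
    (∀ i, 0 ≤ a i) ∧
    (∀ i : Fin n, k ≤ i.val → a i = 0) ∧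
    (∀ i j : Fin n, i ≤ j → j.val < k → a j ≤ a i) ∧
    (∀ t : Fin n, a t ≠ 0 → (∀ s : Fin n, t < s → a s = 0) →
      ∀ (i : ℕ) (h : i + 1 < n), (⟨i + 1, h⟩ : Fin n) ≤ t →
        0 < a ⟨i + 1, h⟩ / a ⟨i, Nat.lt_of_succ_lt h⟩ ∧
        Infml f (a ⟨i + 1, h⟩ / a ⟨i, Nat.lt_of_succ_lt h⟩)) := by
  replace hx : IsInFlagCones f hk v a := hx
  refine ⟨hx.apply_nonneg hli, fun i => hx.apply_eq_zero_of_le hli,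
    fun i j => hx.apply_antitone hli, fun t ht _ i h hit => ?_⟩
  have htk : t.val < k := not_le.mp fun hkt => ht (hx.apply_eq_zero_of_le hli hkt)
  have hik : i + 1 < k := lt_of_le_of_lt hit htk
  have hlt : (⟨i, Nat.lt_of_succ_lt h⟩ : Fin n) < ⟨i + 1, h⟩ := Fin.mk_lt_mk.mpr i.lt_succ_self
  have hsucc : 0 < a ⟨i + 1, h⟩ :=
    ((hx.apply_nonneg hli t).lt_of_ne' ht).trans_le (hx.apply_antitone hli hit htk)
  have hpos : 0 < a ⟨i, Nat.lt_of_succ_lt h⟩ := hsucc.trans_le (hx.apply_antitone hli hlt.le hik)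
  refine ⟨div_pos hsucc hpos, infml_of_forall_le f (div_pos hsucc hpos).le fun ε hε => ?_⟩
  rw [div_le_iff₀ hpos]
  exact hx.apply_le_map_mul_apply hli hlt hik hε

/-- Let `v₁,…,v_n` be a basis of `ℝ^n`, `k ≤ n`, and `x = α₁v₁ + ⋯ + α_nv_n ∈ K^n`.
If for every choice of positive reals `r₁,…,r_k` there exist `β₁,…,β_k ≥ 0` in `K` with
`x = β₁(r₁v₁) + ⋯ + β_k(r₁v₁+⋯+r_kv_k)`, then all `α_i ≥ 0`, `α_i = 0` for `i > k`,
`α_j ≤ α_i` for `i ≤ j ≤ k`, and if `t` is the largest index with `α_t ≠ 0` then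
`α_{i+1}/α_i` is a positive infinitesimal for every `i < t`. -/
theorem stmt19 {K : Type*} [Field K] [LinearOrder K] [IsStrictOrderedRing K] (f : ℝ →+* K) (hf : StrictMono f)
    (n k : ℕ) (hk : k ≤ n)
    (v : Fin n → Fin n → ℝ)
    (hli : LinearIndependent ℝ v)
    (hspan : Submodule.span ℝ (Set.range v) = ⊤)
    (a : Fin n → K)
    (hx : ∀ r : Fin k → ℝ, (∀ i, 0 < r i) → ∃ b : Fin k → K, (∀ j, 0 ≤ b j) ∧
      ∀ c : Fin n,
        (∑ i : Fin n, a i * f (v i c)) =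
          ∑ j : Fin k, b j *
            f (∑ i ∈ Finset.univ.filter (fun i : Fin k => i ≤ j),
                r i * v (Fin.castLE hk i) c)) :
    (∀ i, 0 ≤ a i) ∧
    (∀ i : Fin n, k ≤ i.val → a i = 0) ∧
    (∀ i j : Fin n, i ≤ j → j.val < k → a j ≤ a i) ∧
    (∀ t : Fin n, a t ≠ 0 → (∀ s : Fin n, t < s → a s = 0) →
      ∀ (i : ℕ) (h : i + 1 < n), (⟨i + 1, h⟩ : Fin n) ≤ t →
        0 < a ⟨i + 1, h⟩ / a ⟨i, Nat.lt_of_succ_lt h⟩ ∧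
        Infml f (a ⟨i + 1, h⟩ / a ⟨i, Nat.lt_of_succ_lt h⟩)) :=
  stmt19_general f n k hk v hli a hx
end
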